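/- The identity Σ_{k≥0} C(k+l,l)·p^l·(1-p)^k·C(k+l+r-1,k+l)·ξ^{k+l}·(1-ξ)^r = C(l+r-1,l)·ξ_p^l·(1-ξ_p)^r holds for all integers l ≥ 0, real r > 0, ξ ∈ (0,1), p ∈ (0,1), with ξ_p = pξ/(1-ξ(1-p)). -/

import Mathlib

/-!
Since `C(k+l, l) · C(k+l+r-1, k+l) = C(l+r-1, l) · C(k+l+r-1, k)`, the sum over `k` factors as
`C(l+r-1, l) (pξ)^l (1-ξ)^r` times the negative binomial series `∑ₖ C(k+l+r-1, k) yᵏ` with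
`y = (1-p)ξ`, whose value is `(1-y)^(-(l+r))` by the binomial series. The claim then follows from
`ξ_p = pξ / (1-y)` and `1 - ξ_p = (1-ξ) / (1-y)`.
-/

/-- Generalized negative binomial coefficient C(n+r-1, n) = Γ(n+r)/(Γ(n+1)Γ(r)). -/
noncomputable def nbCoef (r : ℝ) (n : ℕ) : ℝ :=
  Real.Gamma (n + r) / (Real.Gamma (n + 1) * Real.Gamma r)

open Polynomial

theorem Real.Gamma_add_nat_eq_ascPochhammer_mul {s : ℝ} (hs : ∀ m : ℕ, s ≠ -m) (n : ℕ) :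
    Real.Gamma (s + n) = (ascPochhammer ℝ n).eval s * Real.Gamma s := by
  induction n with
  | zero => simp
  | succ n ih =>
    have hsn : s + n ≠ 0 := fun h => hs n (by linarith)
    rw [Nat.cast_succ, ← add_assoc, Real.Gamma_add_one hsn, ih, ascPochhammer_succ_eval]
    ring

theorem nbCoef_eq_multichoose {s : ℝ} (hs : ∀ m : ℕ, s ≠ -m) (n : ℕ) :
    nbCoef s n = Ring.multichoose s n := by
  have hfac : (n.factorial : ℝ) ≠ 0 := by positivity
  rw [nbCoef, Real.Gamma_nat_eq_factorial, add_comm, Real.Gamma_add_nat_eq_ascPochhammer_mul hs,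
    ← ascPochhammer_smeval_eq_eval, ← Ring.factorial_nsmul_multichoose_eq_ascPochhammer,
    nsmul_eq_mul]
  field_simp [Real.Gamma_ne_zero hs]

theorem hasSum_nbCoef_mul_pow {s x : ℝ} (hs : ∀ m : ℕ, s ≠ -m) (hx : |x| < 1) :
    HasSum (fun n => nbCoef s n * x ^ n) ((1 - x) ^ (-s)) := by
  have := (Real.one_div_one_sub_rpow_hasFPowerSeriesOnBall_zero s).hasSum
    (y := x) (by simpa [Real.enorm_eq_ofReal_abs] using hx)
  simp only [FormalMultilinearSeries.ofScalars_apply_eq, smul_eq_mul, zero_add] at this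
  rw [Real.rpow_neg (by linarith [abs_lt.1 hx]), inv_eq_one_div]
  simpa only [nbCoef_eq_multichoose hs, Ring.multichoose_eq] using this

theorem choose_mul_nbCoef_add {r : ℝ} (hr : ∀ m : ℕ, r ≠ -m) (k l : ℕ) :
    ((k + l).choose l : ℝ) * nbCoef r (k + l) = nbCoef r l * nbCoef (l + r) k := by
  have hΓr := Real.Gamma_ne_zero hr
  have hΓlr : Real.Gamma (l + r) ≠ 0 :=
    Real.Gamma_ne_zero fun m h => hr (l + m) (by push_cast; linarith)
  have hc : ((k + l).choose l : ℝ) ≠ 0 := by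
    exact_mod_cast (Nat.choose_pos (Nat.le_add_left l k)).ne'
  have hch := Nat.choose_mul_factorial_mul_factorial (Nat.le_add_left l k)
  rw [Nat.add_sub_cancel] at hch
  rw [nbCoef, nbCoef, nbCoef, Real.Gamma_nat_eq_factorial, Real.Gamma_nat_eq_factorial,
    Real.Gamma_nat_eq_factorial, ← hch]
  push_cast
  field_simp
  ring_nf

theorem hasSum_choose_mul_nbCoef_add_mul_pow {r b : ℝ} (hr : ∀ m : ℕ, r ≠ -m) (hb : |b| < 1)
    (l : ℕ) :
    HasSum (fun k : ℕ => ((k + l).choose l : ℝ) * nbCoef r (k + l) * b ^ k)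
      (nbCoef r l * (1 - b) ^ (-(l + r))) := by
  have hlr : ∀ m : ℕ, (l + r : ℝ) ≠ -m := fun m h => hr (l + m) (by push_cast; linarith)
  simp_rw [choose_mul_nbCoef_add hr, mul_assoc]
  exact (hasSum_nbCoef_mul_pow hlr hb).mul_left _

/-- Marginalization over the unsampled count:
Σ_{k≥0} C(k+l,l) p^l (1-p)^k C(k+l+r-1,k+l) ξ^{k+l} (1-ξ)^r
  = C(l+r-1,l) ξ_p^l (1-ξ_p)^r, with ξ_p = pξ/(1-ξ(1-p)). -/
theorem stmt12 (r ξ p : ℝ) (hr : 0 < r) (hξ : ξ ∈ Set.Ioo (0:ℝ) 1)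
    (hp : p ∈ Set.Ioo (0:ℝ) 1) (l : ℕ) :
    ∑' k : ℕ, ((k + l).choose l : ℝ) * p ^ l * (1 - p) ^ k *
        (nbCoef r (k + l) * ξ ^ (k + l) * (1 - ξ) ^ r)
      = nbCoef r l * (p * ξ / (1 - ξ * (1 - p))) ^ l *
        (1 - p * ξ / (1 - ξ * (1 - p))) ^ r := by
  obtain ⟨hξ0, hξ1⟩ := hξ
  obtain ⟨hp0, hp1⟩ := hp
  set y := ξ * (1 - p)
  have hy : |y| < 1 := abs_lt.2 ⟨by nlinarith, by nlinarith⟩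
  have hy1 : 0 < 1 - y := by linarith [abs_lt.1 hy]
  have hr' : ∀ m : ℕ, r ≠ -m := fun m h => by linarith [m.cast_nonneg (α := ℝ)]
  have hterm : ∀ k : ℕ, ((k + l).choose l : ℝ) * p ^ l * (1 - p) ^ k *
      (nbCoef r (k + l) * ξ ^ (k + l) * (1 - ξ) ^ r)
        = (p * ξ) ^ l * (1 - ξ) ^ r * (((k + l).choose l : ℝ) * nbCoef r (k + l) * y ^ k) := by
    intro k
    simp only [y, mul_pow, pow_add]
    ring
  have hfrac : 1 - p * ξ / (1 - y) = (1 - ξ) / (1 - y) := by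
    field_simp
    ring
  rw [tsum_congr hterm, ((hasSum_choose_mul_nbCoef_add_mul_pow hr' hy l).mul_left _).tsum_eq,
    hfrac, Real.div_rpow (by linarith) hy1.le, neg_add, Real.rpow_add hy1, Real.rpow_neg hy1.le,
    Real.rpow_neg hy1.le, Real.rpow_natCast, div_pow]
  ring
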